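/- Let |A| > 1 and ρ a closed right congruence on A^{-ω}. Then ρ is special (ρ = τ_I for some two-sided ideal I) if and only if ρ = τ_{Res(ρ)}, if and only if Λ'_ρ ⊆ Res(ρ), i.e., every longest common suffix of a nontrivially ρ-related pair is a reset word for Cay(ρ). -/

import Mathlib

/- Left infinite words over A are modelled as functions ℕ → A, where index 0 is
   the rightmost letter.  Appending a finite word on the right: -/

def lapp {A : Type*} (x : ℕ → A) (u : List A) : ℕ → A := fun n =>
  if h : n < u.length then u.reverse[n]'(by simpa using h) else x (n - u.length)

/-- u ∈ A* is a suffix of the left infinite word x -/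
def IsLSuffix {A : Type*} (u : List A) (x : ℕ → A) : Prop := ∃ y : ℕ → A, x = lapp y u

/-- right congruence on A^{-ω}: an equivalence relation compatible with the
  right action of A* (equivalently, with appending each letter) -/
def IsRightCongruence {A : Type*} (ρ : (ℕ → A) → (ℕ → A) → Prop) : Prop :=
  Equivalence ρ ∧ ∀ x y : ℕ → A, ∀ a : A, ρ x y → ρ (lapp x [a]) (lapp y [a])

section Graphs

variable {A Q : Type*}

/-- a left infinite path labelled x ending at q, in the A-graph with edge
  relation E (E p a q : there is an edge from p to q labelled a) -/
def HasLInfPath (E : Q → A → Q → Prop) (x : ℕ → A) (q : Q) : Prop :=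
  ∃ f : ℕ → Q, f 0 = q ∧ ∀ n : ℕ, E (f (n + 1)) (x n) (f n)

def OmegaDeterministic (E : Q → A → Q → Prop) : Prop :=
  ∀ x : ℕ → A, ∀ q q' : Q, HasLInfPath E x q → HasLInfPath E x q' → q = q'

def OmegaComplete (E : Q → A → Q → Prop) : Prop :=
  ∀ x : ℕ → A, ∃ q : Q, HasLInfPath E x q

def OmegaTrim (E : Q → A → Q → Prop) : Prop :=
  ∀ q : Q, ∃ x : ℕ → A, HasLInfPath E x q

/-- (-ω)-reset graph -/
def OmegaReset (E : Q → A → Q → Prop) : Prop :=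
  OmegaDeterministic E ∧ OmegaComplete E ∧ OmegaTrim E

/-- finite paths: HasPath E q u q' means u labels a path from q to q' -/
def HasPath (E : Q → A → Q → Prop) : Q → List A → Q → Prop
  | q, [], q' => q = q'
  | q, a :: u, q' => ∃ p : Q, E q a p ∧ HasPath E p u q'

end Graphs

/-- the setoid on A^{-ω} given by a right congruence -/
def caySetoid {A : Type*} {ρ : (ℕ → A) → (ℕ → A) → Prop} (hρ : IsRightCongruence ρ) :
    Setoid (ℕ → A) := ⟨ρ, hρ.1⟩

/-- the edge relation of the Cayley graph Cay(ρ): edges (uρ, a, (ua)ρ) -/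
def cayE {A : Type*} {ρ : (ℕ → A) → (ℕ → A) → Prop} (hρ : IsRightCongruence ρ) :
    Quotient (caySetoid hρ) → A → Quotient (caySetoid hρ) → Prop :=
  fun c a c' => ∃ u : ℕ → A, c = Quotient.mk (caySetoid hρ) u ∧
    c' = Quotient.mk (caySetoid hρ) (lapp u [a])

/-- the relation τ_P: x τ_P y iff x = y or some u ∈ P is a common suffix of x and y -/
def relTau {A : Type*} (P : Set (List A)) : (ℕ → A) → (ℕ → A) → Prop :=
  fun x y => x = y ∨ ∃ u ∈ P, IsLSuffix u x ∧ IsLSuffix u y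

/-- the suffix-minimal elements of L ⊆ A* (denoted Lβ_ℓ) -/
def minSuffix {A : Type*} (L : Set (List A)) : Set (List A) :=
  {u | u ∈ L ∧ ∀ v ∈ L, v <:+ u → v = u}

/-- suffix code: an antichain for the suffix order -/
def IsSuffixCode {A : Type*} (S : Set (List A)) : Prop :=
  ∀ u ∈ S, ∀ v ∈ S, u <:+ v → u = v

/-- Λ'_ρ: the longest common suffixes lcs(x,y) of pairs (x,y) ∈ ρ with x ≠ y -/
def LambdaP {A : Type*} (ρ : (ℕ → A) → (ℕ → A) → Prop) : Set (List A) :=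
  {u | ∃ x y : ℕ → A, ρ x y ∧ x ≠ y ∧ IsLSuffix u x ∧ IsLSuffix u y ∧
    ∀ v : List A, IsLSuffix v x → IsLSuffix v y → v <:+ u}

/-- Λ_ρ: the longest common suffixes of nonsingular ρ-classes -/
def Lambda {A : Type*} (ρ : (ℕ → A) → (ℕ → A) → Prop) : Set (List A) :=
  {u | ∃ x : ℕ → A, (∃ y : ℕ → A, ρ x y ∧ y ≠ x) ∧
    (∀ z : ℕ → A, ρ x z → IsLSuffix u z) ∧
    ∀ v : List A, (∀ z : ℕ → A, ρ x z → IsLSuffix v z) → v <:+ u}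

/-- A*S: the words having a suffix in S -/
def leftIdealOf {A : Type*} (S : Set (List A)) : Set (List A) :=
  {w | ∃ v : List A, ∃ s ∈ S, w = v ++ s}

/-- Res(ρ): the reset words of the Cayley graph Cay(ρ) -/
def ResSet {A : Type*} {ρ : (ℕ → A) → (ℕ → A) → Prop} (hρ : IsRightCongruence ρ) :
    Set (List A) :=
  {w | ∀ q q' r r' : Quotient (caySetoid hρ),
    HasPath (cayE hρ) q w q' → HasPath (cayE hρ) r w r' → q' = r'}

/-!
In the Cayley graph of a right congruence ρ, the path labelled `w` from the class of `x`
ends at the class of `x w`, so `w` is a reset word iff `ρ (x w) (y w)` for all `x, y`.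
Hence `τ_{Res(ρ)} ⊆ ρ` always, and `ρ ⊆ τ_{Λ'_ρ}` always (a nontrivially related pair is
related through its longest common suffix); so `Λ'_ρ ⊆ Res(ρ)` forces `ρ = τ_{Res(ρ)}`,
and `Res(ρ)` is a two-sided ideal. Conversely, if `ρ = τ_I` for a left ideal `I`, then every
`u ∈ Λ'_ρ` extends some common suffix lying in `I`, so `Λ'_ρ ⊆ I ⊆ Res(ρ)`.
-/

section Words

variable {A : Type*}

theorem lapp_nil (x : ℕ → A) : lapp x [] = x := by
  funext n; simp [lapp]

theorem lapp_lapp (x : ℕ → A) (v u : List A) : lapp (lapp x v) u = lapp x (v ++ u) := by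
  funext n
  simp only [lapp, List.length_append, List.reverse_append]
  by_cases h1 : n < u.length
  · rw [dif_pos h1, dif_pos (by omega), List.getElem_append_left (by simpa using h1)]
  · rw [dif_neg h1]
    by_cases h2 : n - u.length < v.length
    · rw [dif_pos h2, dif_pos (by omega), List.getElem_append_right (by simpa using h1)]
      simp
    · rw [dif_neg h2, dif_neg (by omega)]
      congr 1; omega

theorem isLSuffix_iff (v : List A) (x : ℕ → A) :
    IsLSuffix v x ↔ ∀ k (h : k < v.length), x k = v.reverse[k]'(by simpa using h) := by
  constructor
  · rintro ⟨y, rfl⟩ k h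
    simp [lapp, h]
  · intro h
    refine ⟨fun m => x (m + v.length), funext fun n => ?_⟩
    simp only [lapp]
    by_cases hn : n < v.length
    · rw [dif_pos hn]; exact h n hn
    · rw [dif_neg hn]; congr 1; omega

theorem isLSuffix_lapp (x : ℕ → A) (u : List A) : IsLSuffix u (lapp x u) := ⟨x, rfl⟩

theorem exists_longest_common_lSuffix {x y : ℕ → A} (hxy : x ≠ y) :
    ∃ u : List A, IsLSuffix u x ∧ IsLSuffix u y ∧
      ∀ v, IsLSuffix v x → IsLSuffix v y → v <:+ u := by
  classical
  have hex : ∃ k, x k ≠ y k := by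
    by_contra! h; exact hxy (funext h)
  set n := Nat.find hex
  have hagree : ∀ k < n, x k = y k := fun k hk => not_not.1 (Nat.find_min hex hk)
  have hne : x n ≠ y n := Nat.find_spec hex
  refine ⟨(List.ofFn fun i : Fin n => x i).reverse, ?_, ?_, ?_⟩
  · rw [isLSuffix_iff]
    intro k h
    simp only [List.length_reverse, List.length_ofFn] at h
    simp
  · rw [isLSuffix_iff]
    intro k h
    simp only [List.length_reverse, List.length_ofFn] at h
    simp [hagree k h]
  · intro v hvx hvy
    rw [isLSuffix_iff] at hvx hvy
    have hlen : v.length ≤ n := by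
      by_contra! h
      exact hne ((hvx n h).trans (hvy n h).symm)
    have hv : v.reverse = (List.ofFn fun i : Fin n => x i).take v.length := by
      apply List.ext_getElem
      · simp [hlen]
      · intro k h1 _
        rw [List.getElem_take, List.getElem_ofFn]
        exact (hvx k (by simpa using h1)).symm
    rw [← List.reverse_prefix, List.reverse_reverse, hv]
    exact List.take_prefix _ _

theorem relTau_mono {P P' : Set (List A)} (h : P ⊆ P') {x y : ℕ → A} :
    relTau P x y → relTau P' x y :=
  Or.imp_right fun ⟨u, hu, hux, huy⟩ => ⟨u, h hu, hux, huy⟩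

theorem relTau_lambdaP_of_rel {ρ : (ℕ → A) → (ℕ → A) → Prop} {x y : ℕ → A} (hxy : ρ x y) :
    relTau (LambdaP ρ) x y := by
  by_cases hne : x = y
  · exact Or.inl hne
  · obtain ⟨u, hux, huy, hmax⟩ := exists_longest_common_lSuffix hne
    exact Or.inr ⟨u, ⟨x, y, hxy, hne, hux, huy, hmax⟩, hux, huy⟩

theorem lambdaP_subset_of_eq_relTau {ρ : (ℕ → A) → (ℕ → A) → Prop} {I : Set (List A)}
    (hI : ∀ u ∈ I, ∀ v : List A, v ++ u ∈ I) (hρI : ρ = relTau I) : LambdaP ρ ⊆ I := by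
  rintro u ⟨x, y, hxy, hne, -, -, hmax⟩
  rw [hρI] at hxy
  obtain ⟨w, hwI, hwx, hwy⟩ := hxy.resolve_left hne
  obtain ⟨t, rfl⟩ := hmax w hwx hwy
  exact hI w hwI t

theorem IsRightCongruence.rel_lapp {ρ : (ℕ → A) → (ℕ → A) → Prop} (hρ : IsRightCongruence ρ)
    {x y : ℕ → A} (hxy : ρ x y) (v : List A) : ρ (lapp x v) (lapp y v) := by
  induction v using List.reverseRecOn with
  | nil => simpa only [lapp_nil] using hxy
  | append_singleton v a ih => simpa only [← lapp_lapp] using hρ.2 _ _ a ih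

section Cayley

variable {ρ : (ℕ → A) → (ℕ → A) → Prop} (hρ : IsRightCongruence ρ)

local notation "cls" => Quotient.mk (caySetoid hρ)

theorem hasPath_cayE_mk (x : ℕ → A) (w : List A) :
    HasPath (cayE hρ) (cls x) w (cls (lapp x w)) := by
  induction w generalizing x with
  | nil => exact (congrArg _ (lapp_nil x)).symm
  | cons a u ih =>
    refine ⟨cls (lapp x [a]), ⟨x, rfl, rfl⟩, ?_⟩
    simpa only [lapp_lapp, List.singleton_append] using ih (lapp x [a])

theorem eq_of_hasPath_cayE_mk {x : ℕ → A} {w : List A} {q : Quotient (caySetoid hρ)}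
    (h : HasPath (cayE hρ) (cls x) w q) : q = cls (lapp x w) := by
  induction w generalizing x with
  | nil => rw [lapp_nil]; exact (h : _ = _).symm
  | cons a u ih =>
    obtain ⟨p, ⟨z, hzx, rfl⟩, hp⟩ := h
    have hza : cls (lapp z [a]) = cls (lapp x [a]) :=
      Quotient.sound (hρ.2 z x a (hρ.1.symm (Quotient.exact hzx)))
    rw [hza] at hp
    simpa only [lapp_lapp, List.singleton_append] using ih hp

theorem mem_resSet_iff (w : List A) :
    w ∈ ResSet hρ ↔ ∀ x y : ℕ → A, ρ (lapp x w) (lapp y w) := by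
  constructor
  · intro hw x y
    exact Quotient.exact (hw _ _ _ _ (hasPath_cayE_mk hρ x w) (hasPath_cayE_mk hρ y w))
  · intro hw q q' r r' hq hr
    obtain ⟨x, rfl⟩ := q.exists_rep
    obtain ⟨y, rfl⟩ := r.exists_rep
    rw [eq_of_hasPath_cayE_mk hρ hq, eq_of_hasPath_cayE_mk hρ hr]
    exact Quotient.sound (hw x y)

theorem append_append_mem_resSet {u : List A} (hu : u ∈ ResSet hρ) (v w : List A) :
    v ++ u ++ w ∈ ResSet hρ := by
  rw [mem_resSet_iff]
  intro x y
  simpa only [← lapp_lapp] using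
    hρ.rel_lapp ((mem_resSet_iff hρ u).1 hu (lapp x v) (lapp y v)) w

theorem rel_of_relTau_resSet {x y : ℕ → A} (h : relTau (ResSet hρ) x y) : ρ x y := by
  rcases h with rfl | ⟨w, hw, ⟨x', rfl⟩, ⟨y', rfl⟩⟩
  · exact hρ.1.refl x
  · exact (mem_resSet_iff hρ w).1 hw x' y'

theorem subset_resSet_of_eq_relTau {I : Set (List A)} (hρI : ρ = relTau I) :
    I ⊆ ResSet hρ := by
  intro u hu
  rw [mem_resSet_iff, hρI]
  exact fun x y => Or.inr ⟨u, hu, isLSuffix_lapp x u, isLSuffix_lapp y u⟩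

theorem eq_relTau_resSet_of_lambdaP_subset (h : LambdaP ρ ⊆ ResSet hρ) :
    ρ = relTau (ResSet hρ) := by
  funext x y
  exact propext ⟨fun hxy => relTau_mono h (relTau_lambdaP_of_rel hxy),
    rel_of_relTau_resSet hρ⟩

end Cayley

end Words

theorem special_closed_rightCongruence_iff_general {A : Type*}
    (ρ : (ℕ → A) → (ℕ → A) → Prop) (hρ : IsRightCongruence ρ) :
    ((∃ I : Set (List A), (∀ u ∈ I, ∀ v w : List A, v ++ u ++ w ∈ I) ∧ ρ = relTau I) ↔
      ρ = relTau (ResSet hρ)) ∧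
    ((∃ I : Set (List A), (∀ u ∈ I, ∀ v w : List A, v ++ u ++ w ∈ I) ∧ ρ = relTau I) ↔
      LambdaP ρ ⊆ ResSet hρ) := by
  have special_of_eq : ρ = relTau (ResSet hρ) → ∃ I : Set (List A),
      (∀ u ∈ I, ∀ v w : List A, v ++ u ++ w ∈ I) ∧ ρ = relTau I :=
    fun h => ⟨ResSet hρ, fun u hu => append_append_mem_resSet hρ hu, h⟩
  have lambdaP_subset : (∃ I : Set (List A),
      (∀ u ∈ I, ∀ v w : List A, v ++ u ++ w ∈ I) ∧ ρ = relTau I) → LambdaP ρ ⊆ ResSet hρ := by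
    rintro ⟨I, hI, hρI⟩
    have hleft : ∀ u ∈ I, ∀ v : List A, v ++ u ∈ I := fun u hu v => by
      simpa only [List.append_nil] using hI u hu v []
    exact (lambdaP_subset_of_eq_relTau hleft hρI).trans (subset_resSet_of_eq_relTau hρ hρI)
  exact ⟨⟨fun hS => eq_relTau_resSet_of_lambdaP_subset hρ (lambdaP_subset hS), special_of_eq⟩,
    ⟨lambdaP_subset, fun h => special_of_eq (eq_relTau_resSet_of_lambdaP_subset hρ h)⟩⟩

/-- for a closed right congruence ρ on A^{-ω} (|A| > 1): ρ is
  special (ρ = τ_I for some two-sided ideal I) iff ρ = τ_{Res(ρ)}, iff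
  Λ'_ρ ⊆ Res(ρ). -/
theorem special_closed_rightCongruence_iff {A : Type*} [Fintype A]
    [TopologicalSpace A] [DiscreteTopology A] (h2 : ∃ a b : A, a ≠ b)
    (ρ : (ℕ → A) → (ℕ → A) → Prop) (hρ : IsRightCongruence ρ)
    (hclosed : IsClosed {p : (ℕ → A) × (ℕ → A) | ρ p.1 p.2}) :
    ((∃ I : Set (List A), (∀ u ∈ I, ∀ v w : List A, v ++ u ++ w ∈ I) ∧ ρ = relTau I) ↔
      ρ = relTau (ResSet hρ)) ∧
    ((∃ I : Set (List A), (∀ u ∈ I, ∀ v w : List A, v ++ u ++ w ∈ I) ∧ ρ = relTau I) ↔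
      LambdaP ρ ⊆ ResSet hρ) :=
  special_closed_rightCongruence_iff_general ρ hρ
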